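/- arXiv:math/0103235 — 3 statements merged into one kernel-verified Lean document; each statement's English description precedes it below -/
import Mathlib

section
/- Let φ = (f,g) be a weighted homogeneous polynomial map of degrees (m, 2m) with m ≥ 2 even, mapping the hyperquadric Q = {Im w = ⟨z,z⟩} into itself. Then g(z,u) - conj(g)(0,u) = 2i⟨f(z,u), f(0,u)⟩ for all z ∈ C^n and real u, where conj(g) denotes the polynomial with conjugated coefficients. -/
/-!
On `Q` the map satisfies `Im G(z, w) = ‖F(z, w)‖²`. Writing `w = u + i⟨z, z⟩` and replacing `z̄` by
an independent variable `ζ̄` turns `G(z, w₁) - conj G(ζ, w₂) - 2i⟨F(z, w₁), F(ζ, w₂)⟩` into a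
polynomial in `(z, ζ̄)`, where `w₁ = u + i⟨z, ζ⟩` and `w₂ = u + i⟨ζ, z⟩`. It vanishes on the
totally real set `ζ = z`, hence identically. Taking `ζ = 0` gives the claim.
-/

open Complex MvPolynomial ComplexConjugate

namespace MvPolynomial

variable {R σ τ : Type*} [CommSemiring R]

theorem eval_bind₁ (x : τ → R) (s : σ → MvPolynomial τ R) (p : MvPolynomial σ R) :
    eval x (bind₁ s p) = eval (fun i => eval x (s i)) p :=
  eval₂Hom_bind₁ _ _ _ _

theorem eq_zero_of_eval_ofReal_eq_zero {p : MvPolynomial σ ℂ}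
    (h : ∀ x : σ → ℝ, eval (ofReal ∘ x) p = 0) : p = 0 := by
  refine funext_set (fun _ => Set.range ofReal)
    (fun _ => Set.infinite_range_of_injective ofReal_injective) fun x hx => ?_
  choose y hy using fun i => hx i trivial
  obtain rfl : ofReal ∘ y = x := _root_.funext hy
  simpa using h y

theorem eq_zero_of_eval_sumElim_conj_eq_zero {ι : Type*} {p : MvPolynomial (ι ⊕ ι) ℂ}
    (h : ∀ z : ι → ℂ, eval (Sum.elim z (conj ∘ z)) p = 0) : p = 0 := by
  -- `z = x + i y` and `conj z = x - i y` with `x`, `y` real; `y'` below inverts this substitution.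
  let s : ι ⊕ ι → MvPolynomial (ι ⊕ ι) ℂ :=
    Sum.elim (fun j => X (Sum.inl j) + C I * X (Sum.inr j))
      (fun j => X (Sum.inl j) - C I * X (Sum.inr j))
  have hs : bind₁ s p = 0 := eq_zero_of_eval_ofReal_eq_zero fun x => by
    rw [eval_bind₁]
    convert h (fun j => x (Sum.inl j) + I * x (Sum.inr j)) using 2
    ext (j | j) <;> simp [s, sub_eq_add_neg]
  refine funext fun y => ?_
  let y' : ι ⊕ ι → ℂ := Sum.elim (fun j => (y (Sum.inl j) + y (Sum.inr j)) / 2)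
    (fun j => (y (Sum.inl j) - y (Sum.inr j)) / (2 * I))
  calc eval y p = eval (fun i => eval y' (s i)) p := by
        congr 1
        ext (j | j) <;> simp [s, y'] <;> field_simp <;> ring
    _ = eval y 0 := by rw [← eval_bind₁, hs, map_zero, map_zero]

theorem eval_map_conj (x : σ → ℂ) (p : MvPolynomial σ ℂ) :
    eval x (map (starRingEnd ℂ) p) = conj (eval (conj ∘ x) p) := by
  rw [eval_map, eval, coe_eval₂Hom, eval₂_comp_left]
  simp [Function.comp_def]

theorem eval_bind₁_snoc {n : ℕ} (x : σ → R) (s : Fin n → MvPolynomial σ R)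
    (t : MvPolynomial σ R) (p : MvPolynomial (Fin (n + 1)) R) :
    eval x (bind₁ (Fin.snoc s t) p) = eval (Fin.snoc (fun j => eval x (s j)) (eval x t)) p := by
  rw [eval_bind₁]
  exact congrArg (eval · p) (Fin.comp_snoc _ _ _)

end MvPolynomial

section Hyperquadric

variable {n : ℕ}

/- `X (Sum.inl j)` plays `z j` and `X (Sum.inr j)` plays `conj (ζ j)`: the two substitutions are
`(z, u + i⟨z, ζ⟩)` and the conjugate of `(ζ, u + i⟨ζ, z⟩)`, see the evaluation lemmas below. -/
noncomputable def polarSubstLeft (u : ℝ) : Fin (n + 1) → MvPolynomial (Fin n ⊕ Fin n) ℂ :=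
  Fin.snoc (fun j => X (Sum.inl j)) (C (u : ℂ) + C I * ∑ j, X (Sum.inl j) * X (Sum.inr j))

noncomputable def polarSubstRight (u : ℝ) : Fin (n + 1) → MvPolynomial (Fin n ⊕ Fin n) ℂ :=
  Fin.snoc (fun j => X (Sum.inr j)) (C (u : ℂ) - C I * ∑ j, X (Sum.inl j) * X (Sum.inr j))

theorem eval_bind₁_polarSubstLeft (u : ℝ) (z ζ : Fin n → ℂ) (p : MvPolynomial (Fin (n + 1)) ℂ) :
    eval (Sum.elim z (conj ∘ ζ)) (bind₁ (polarSubstLeft u) p) =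
      eval (Fin.snoc z (u + I * ∑ j, z j * conj (ζ j))) p := by
  simp [polarSubstLeft, eval_bind₁_snoc]

theorem eval_bind₁_polarSubstRight (u : ℝ) (z ζ : Fin n → ℂ) (p : MvPolynomial (Fin (n + 1)) ℂ) :
    eval (Sum.elim z (conj ∘ ζ)) (bind₁ (polarSubstRight u) (map (starRingEnd ℂ) p)) =
      conj (eval (Fin.snoc ζ (u + I * ∑ j, ζ j * conj (z j))) p) := by
  rw [polarSubstRight, eval_bind₁_snoc, eval_map_conj, Fin.comp_snoc]
  simp [Function.comp_def, mul_comm]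

def MapsToHyperquadric (F : Fin n → MvPolynomial (Fin (n + 1)) ℂ)
    (G : MvPolynomial (Fin (n + 1)) ℂ) : Prop :=
  ∀ (z : Fin n → ℂ) (w : ℂ), w.im = ∑ j, ‖z j‖ ^ 2 →
    (eval (Fin.snoc z w) G).im = ∑ j, ‖eval (Fin.snoc z w) (F j)‖ ^ 2

noncomputable def polarDefect (u : ℝ) (F : Fin n → MvPolynomial (Fin (n + 1)) ℂ)
    (G : MvPolynomial (Fin (n + 1)) ℂ) : MvPolynomial (Fin n ⊕ Fin n) ℂ :=
  bind₁ (polarSubstLeft u) G - bind₁ (polarSubstRight u) (map (starRingEnd ℂ) G) -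
    C (2 * I) * ∑ j, bind₁ (polarSubstLeft u) (F j) *
      bind₁ (polarSubstRight u) (map (starRingEnd ℂ) (F j))

theorem eval_polarDefect (u : ℝ) (F : Fin n → MvPolynomial (Fin (n + 1)) ℂ)
    (G : MvPolynomial (Fin (n + 1)) ℂ) (z ζ : Fin n → ℂ) :
    let w₁ : ℂ := u + I * ∑ j, z j * conj (ζ j)
    let w₂ : ℂ := u + I * ∑ j, ζ j * conj (z j)
    eval (Sum.elim z (conj ∘ ζ)) (polarDefect u F G) =
      eval (Fin.snoc z w₁) G - conj (eval (Fin.snoc ζ w₂) G) -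
        2 * I * ∑ j, eval (Fin.snoc z w₁) (F j) * conj (eval (Fin.snoc ζ w₂) (F j)) := by
  simp only [polarDefect, map_sub, map_mul, map_sum, eval_C, eval_bind₁_polarSubstLeft,
    eval_bind₁_polarSubstRight]

theorem MapsToHyperquadric.polarDefect_eq_zero {F : Fin n → MvPolynomial (Fin (n + 1)) ℂ}
    {G : MvPolynomial (Fin (n + 1)) ℂ} (hFG : MapsToHyperquadric F G) (u : ℝ) :
    polarDefect u F G = 0 := by
  refine eq_zero_of_eval_sumElim_conj_eq_zero fun z => ?_
  have hw : (u + I * ∑ j, z j * conj (z j)).im = ∑ j, ‖z j‖ ^ 2 := by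
    simp [mul_conj, normSq_eq_norm_sq, -ofReal_pow]
  rw [eval_polarDefect, sub_conj, hFG z _ hw]
  simp only [mul_conj, normSq_eq_norm_sq, ofReal_pow, ofReal_mul, ofReal_ofNat, ofReal_sum]
  ring

theorem MapsToHyperquadric.polarization {F : Fin n → MvPolynomial (Fin (n + 1)) ℂ}
    {G : MvPolynomial (Fin (n + 1)) ℂ} (hFG : MapsToHyperquadric F G) (u : ℝ)
    (z ζ : Fin n → ℂ) :
    let w₁ : ℂ := u + I * ∑ j, z j * conj (ζ j)
    let w₂ : ℂ := u + I * ∑ j, ζ j * conj (z j)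
    eval (Fin.snoc z w₁) G - conj (eval (Fin.snoc ζ w₂) G) =
      2 * I * ∑ j, eval (Fin.snoc z w₁) (F j) * conj (eval (Fin.snoc ζ w₂) (F j)) :=
  sub_eq_zero.mp <| by rw [← eval_polarDefect, hFG.polarDefect_eq_zero, map_zero]

end Hyperquadric

theorem stmt_1_general (n : ℕ)
    (F : Fin n → MvPolynomial (Fin (n + 1)) ℂ)
    (G : MvPolynomial (Fin (n + 1)) ℂ)
    (f : (Fin n → ℂ) → ℂ → (Fin n → ℂ)) (g : (Fin n → ℂ) → ℂ → ℂ)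
    (hfP : ∀ (z : Fin n → ℂ) (w : ℂ) (j : Fin n),
      f z w j = MvPolynomial.eval (Fin.snoc z w) (F j))
    (hgP : ∀ (z : Fin n → ℂ) (w : ℂ), g z w = MvPolynomial.eval (Fin.snoc z w) G)
    (hmap : ∀ (z : Fin n → ℂ) (w : ℂ), w.im = ∑ j, ‖z j‖ ^ 2 →
      (g z w).im = ∑ j, ‖f z w j‖ ^ 2) :
    ∀ (z : Fin n → ℂ) (u : ℝ),
      g z (u : ℂ) - (starRingEnd ℂ) (g 0 (u : ℂ)) =
        2 * Complex.I * ∑ j, f z (u : ℂ) j * (starRingEnd ℂ) (f 0 (u : ℂ) j) := by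
  intro z u
  have hFG : MapsToHyperquadric F G := fun z w hw => by
    simpa only [hfP, hgP] using hmap z w hw
  simpa [hfP, hgP] using hFG.polarization u z 0

/-- For an even-degree weighted homogeneous polynomial map `(f,g)` of `Q` into `Q`,
`g(z,u) - conj(g)(0,u) = 2i⟨f(z,u), f(0,u)⟩` for all `z ∈ ℂⁿ` and real `u`. -/
theorem stmt_1 (n m : ℕ) (hm : 2 ≤ m) (hme : Even m)
    (F : Fin n → MvPolynomial (Fin (n + 1)) ℂ)
    (G : MvPolynomial (Fin (n + 1)) ℂ)
    (f : (Fin n → ℂ) → ℂ → (Fin n → ℂ)) (g : (Fin n → ℂ) → ℂ → ℂ)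
    (hfP : ∀ (z : Fin n → ℂ) (w : ℂ) (j : Fin n),
      f z w j = MvPolynomial.eval (Fin.snoc z w) (F j))
    (hgP : ∀ (z : Fin n → ℂ) (w : ℂ), g z w = MvPolynomial.eval (Fin.snoc z w) G)
    (hfh : ∀ (μ : ℂ) (z : Fin n → ℂ) (w : ℂ), f (μ • z) (μ ^ 2 * w) = μ ^ m • f z w)
    (hgh : ∀ (μ : ℂ) (z : Fin n → ℂ) (w : ℂ), g (μ • z) (μ ^ 2 * w) = μ ^ (2 * m) * g z w)
    (hmap : ∀ (z : Fin n → ℂ) (w : ℂ), w.im = ∑ j, ‖z j‖ ^ 2 →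
      (g z w).im = ∑ j, ‖f z w j‖ ^ 2) :
    ∀ (z : Fin n → ℂ) (u : ℝ),
      g z (u : ℂ) - (starRingEnd ℂ) (g 0 (u : ℂ)) =
        2 * Complex.I * ∑ j, f z (u : ℂ) j * (starRingEnd ℂ) (f 0 (u : ℂ) j) :=
  stmt_1_general n F G f g hfP hgP hmap
end

section
/- Let φ = (f,g) be a weighted homogeneous polynomial map of odd degree m = 2k+1 ≥ 3, with f of degree m in the weighting and g of degree 2m, i.e. g(μz,μ²w) = μ^{2m} g(z,w), mapping Q into Q. Then f(0,w) = 0 for all w, and g(z,u) = g(0,u) with g(0,1) real. -/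
open Complex

section AuxPolar
open MvPolynomial


lemma my_eval_bind₁ {σ τ : Type*} (v : τ → ℂ) (h : σ → MvPolynomial τ ℂ) (φ : MvPolynomial σ ℂ) :
    eval v (bind₁ h φ) = eval (fun i => eval v (h i)) φ :=
  eval₂Hom_bind₁ _ _ _ _

lemma my_eval_conj {σ : Type*} (v : σ → ℂ) (φ : MvPolynomial σ ℂ) :
    (starRingEnd ℂ) (eval v φ)
      = eval (fun i => (starRingEnd ℂ) (v i)) (map (starRingEnd ℂ) φ) := by
  rw [← eval₂_eq_eval_map, show eval v φ = eval₂ (RingHom.id ℂ) v φ from (eval₂_id φ).symm,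
    eval₂_comp_left, RingHom.comp_id]
  rfl

lemma eval_map_conj {σ : Type*} (v : σ → ℂ) (φ : MvPolynomial σ ℂ) :
    eval v (map (starRingEnd ℂ) φ)
      = (starRingEnd ℂ) (eval (fun i => (starRingEnd ℂ) (v i)) φ) := by
  have := my_eval_conj (fun i => (starRingEnd ℂ) (v i)) φ
  simpa using this.symm

lemma exists_poly (Q : MvPolynomial (Fin 2) ℂ) (v : Fin 2 → Polynomial ℂ) :
    ∃ p : Polynomial ℂ, ∀ x : ℂ,
      Polynomial.eval x p = eval (fun i => Polynomial.eval x (v i)) Q := by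
  refine ⟨eval₂ Polynomial.C v Q, fun x => ?_⟩
  have h := eval₂_comp_left (Polynomial.evalRingHom x) Polynomial.C v Q
  have h2 : (Polynomial.evalRingHom x).comp Polynomial.C = RingHom.id ℂ := by
    ext r; simp
  rw [h2] at h
  simpa [eval₂_id, Function.comp_def] using h

lemma vanish_real (Q : MvPolynomial (Fin 2) ℂ)
    (h : ∀ a b : ℝ, eval ![(a:ℂ), (b:ℂ)] Q = 0) (x y : ℂ) :
    eval ![x, y] Q = 0 := by
  have key : ∀ p : Polynomial ℂ, (∀ a : ℝ, Polynomial.eval (a:ℂ) p = 0) → p = 0 := by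
    intro p hp
    apply Polynomial.eq_zero_of_infinite_isRoot
    apply Set.infinite_of_injective_forall_mem (f := fun a : ℝ => (a:ℂ))
    · exact Complex.ofReal_injective
    · intro a; exact hp a
  have step1 : ∀ (b : ℝ) (x : ℂ), eval ![x, (b:ℂ)] Q = 0 := by
    intro b x
    obtain ⟨p, hp⟩ := exists_poly Q ![Polynomial.X, Polynomial.C (b:ℂ)]
    have harg : ∀ t : ℂ, (fun i => Polynomial.eval t (![Polynomial.X, Polynomial.C ((b:ℂ))] i)) = ![t, (b:ℂ)] := by
      intro t; funext i; fin_cases i <;> simp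
    have hz : p = 0 := key p (fun a => by rw [hp, harg]; exact h a b)
    have := hp x
    rw [hz, harg] at this
    simpa using this.symm
  obtain ⟨p, hp⟩ := exists_poly Q ![Polynomial.C x, Polynomial.X]
  have harg : ∀ t : ℂ, (fun i => Polynomial.eval t (![Polynomial.C x, Polynomial.X] i)) = ![x, t] := by
    intro t; funext i; fin_cases i <;> simp
  have hz : p = 0 := key p (fun b => by rw [hp, harg]; exact step1 b x)
  have := hp y
  rw [hz, harg] at this
  simpa using this.symm

lemma polar (P : MvPolynomial (Fin 2) ℂ)
    (h : ∀ t : ℂ, eval ![t, (starRingEnd ℂ) t] P = 0) (x y : ℂ) :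
    eval ![x, y] P = 0 := by
  set ψ : Fin 2 → MvPolynomial (Fin 2) ℂ := ![X 0 + C I * X 1, X 0 - C I * X 1] with hψ
  have hQ : ∀ u v : ℂ, eval ![u, v] (bind₁ ψ P) = eval ![u + I*v, u - I*v] P := by
    intro u v
    rw [my_eval_bind₁]
    have harg : (fun i => eval ![u, v] (ψ i)) = ![u + I*v, u - I*v] := by
      funext i; fin_cases i <;> simp [hψ]
    rw [harg]
  have hr : ∀ a b : ℝ, eval ![(a:ℂ), (b:ℂ)] (bind₁ ψ P) = 0 := by
    intro a b
    rw [hQ]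
    have hc : ((a:ℂ) - I*b) = (starRingEnd ℂ) ((a:ℂ) + I*b) := by
      simp [Complex.ext_iff]
    rw [hc]
    exact h _
  have := vanish_real (bind₁ ψ P) hr ((x+y)/2) ((x-y)/(2*I))
  rw [hQ] at this
  have e1 : (x+y)/2 + I*((x-y)/(2*I)) = x := by
    field_simp
    ring
  have e2 : (x+y)/2 - I*((x-y)/(2*I)) = y := by
    field_simp
    ring
  rwa [e1, e2] at this

end AuxPolar

/-- For an odd-degree (`m = 2k+1 ≥ 3`) weighted homogeneous polynomial map `(f,g)`
of `Q` into `Q`, `f(0,w) = 0` for all `w`, and `g(z,u) = g(0,u)` with `g(0,1)` real. -/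
theorem stmt_2 (n m : ℕ) (hm : 3 ≤ m) (hmo : Odd m)
    (F : Fin n → MvPolynomial (Fin (n + 1)) ℂ)
    (G : MvPolynomial (Fin (n + 1)) ℂ)
    (f : (Fin n → ℂ) → ℂ → (Fin n → ℂ)) (g : (Fin n → ℂ) → ℂ → ℂ)
    (hfP : ∀ (z : Fin n → ℂ) (w : ℂ) (j : Fin n),
      f z w j = MvPolynomial.eval (Fin.snoc z w) (F j))
    (hgP : ∀ (z : Fin n → ℂ) (w : ℂ), g z w = MvPolynomial.eval (Fin.snoc z w) G)
    (hfh : ∀ (μ : ℂ) (z : Fin n → ℂ) (w : ℂ), f (μ • z) (μ ^ 2 * w) = μ ^ m • f z w)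
    (hgh : ∀ (μ : ℂ) (z : Fin n → ℂ) (w : ℂ), g (μ • z) (μ ^ 2 * w) = μ ^ (2 * m) * g z w)
    (hmap : ∀ (z : Fin n → ℂ) (w : ℂ), w.im = ∑ j, ‖z j‖ ^ 2 →
      (g z w).im = ∑ j, ‖f z w j‖ ^ 2) :
    (∀ w : ℂ, f 0 w = 0) ∧
    (∀ (z : Fin n → ℂ) (u : ℝ), g z (u : ℂ) = g 0 (u : ℂ)) ∧
    (g 0 1).im = 0 := by
  classical
  -- Part 1 : f (0, w) = 0
  have hf0 : ∀ w : ℂ, f 0 w = 0 := by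
    intro w
    have h := hfh (-1) 0 w
    rw [smul_zero, show ((-1:ℂ))^2 * w = w by ring, hmo.neg_one_pow] at h
    funext j
    have hj := congrFun h j
    simp only [Pi.smul_apply, neg_smul, one_smul, Pi.zero_apply] at hj ⊢
    have h2 : 2 * f 0 w j = 0 := by linear_combination hj
    have := mul_eq_zero.mp h2
    simpa using this
  -- the key polarization
  have key : ∀ (z₀ : Fin n → ℂ) (u : ℝ), g z₀ (u:ℂ) = (starRingEnd ℂ) (g 0 (u:ℂ)) := by
    intro z₀ u
    set σ : ℝ := ∑ j, ‖z₀ j‖ ^ 2 with hσ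
    set φ₁ : Fin (n+1) → MvPolynomial (Fin 2) ℂ :=
      Fin.snoc (fun i => MvPolynomial.C (z₀ i) * MvPolynomial.X 0)
        (MvPolynomial.C ((u:ℂ)) + MvPolynomial.C (I*σ) * (MvPolynomial.X 0 * MvPolynomial.X 1))
      with hφ₁
    set φ₂ : Fin (n+1) → MvPolynomial (Fin 2) ℂ :=
      Fin.snoc (fun i => MvPolynomial.C ((starRingEnd ℂ) (z₀ i)) * MvPolynomial.X 1)
        (MvPolynomial.C ((u:ℂ)) - MvPolynomial.C (I*σ) * (MvPolynomial.X 0 * MvPolynomial.X 1))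
      with hφ₂
    set P : MvPolynomial (Fin 2) ℂ :=
      MvPolynomial.C (1/(2*I)) *
        (MvPolynomial.bind₁ φ₁ G - MvPolynomial.bind₁ φ₂ (MvPolynomial.map (starRingEnd ℂ) G))
      - ∑ j, (MvPolynomial.bind₁ φ₁ (F j)) *
          (MvPolynomial.bind₁ φ₂ (MvPolynomial.map (starRingEnd ℂ) (F j))) with hP
    have harg₁ : ∀ t s : ℂ, (fun i => MvPolynomial.eval ![t, s] (φ₁ i)) =
        Fin.snoc (t • z₀) ((u:ℂ) + I*σ*(t*s)) := by
      intro t s; funext i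
      refine Fin.lastCases ?_ (fun i => ?_) i
      · simp [hφ₁]
      · simp [hφ₁, mul_comm]
    have harg₂ : ∀ t s : ℂ, (fun i => (starRingEnd ℂ) (MvPolynomial.eval ![t, s] (φ₂ i))) =
        Fin.snoc (((starRingEnd ℂ) s) • z₀) ((u:ℂ) + I*σ*((starRingEnd ℂ) t * (starRingEnd ℂ) s)) := by
      intro t s; funext i
      refine Fin.lastCases ?_ (fun i => ?_) i
      · simp only [hφ₂, Fin.snoc_last, map_sub, map_mul, map_add, MvPolynomial.eval_C,
          MvPolynomial.eval_X, Matrix.cons_val_zero, Matrix.cons_val_one, Matrix.head_cons,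
          Complex.conj_ofReal, Complex.conj_I]
        ring
      · simp [hφ₂, mul_comm]
    have e1 : ∀ t s : ℂ, MvPolynomial.eval ![t, s] (MvPolynomial.bind₁ φ₁ G) =
        g (t • z₀) ((u:ℂ) + I*σ*(t*s)) := by
      intro t s; rw [my_eval_bind₁, harg₁, ← hgP]
    have e1f : ∀ (t s : ℂ) (j : Fin n), MvPolynomial.eval ![t, s] (MvPolynomial.bind₁ φ₁ (F j)) =
        f (t • z₀) ((u:ℂ) + I*σ*(t*s)) j := by
      intro t s j; rw [my_eval_bind₁, harg₁, ← hfP]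
    have e2 : ∀ t s : ℂ, MvPolynomial.eval ![t, s]
          (MvPolynomial.bind₁ φ₂ (MvPolynomial.map (starRingEnd ℂ) G)) =
        (starRingEnd ℂ) (g (((starRingEnd ℂ) s) • z₀)
          ((u:ℂ) + I*σ*((starRingEnd ℂ) t * (starRingEnd ℂ) s))) := by
      intro t s; rw [my_eval_bind₁, eval_map_conj, harg₂, ← hgP]
    have e2f : ∀ (t s : ℂ) (j : Fin n), MvPolynomial.eval ![t, s]
          (MvPolynomial.bind₁ φ₂ (MvPolynomial.map (starRingEnd ℂ) (F j))) =
        (starRingEnd ℂ) (f (((starRingEnd ℂ) s) • z₀)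
          ((u:ℂ) + I*σ*((starRingEnd ℂ) t * (starRingEnd ℂ) s)) j) := by
      intro t s j; rw [my_eval_bind₁, eval_map_conj, harg₂, ← hfP]
    have hEP : ∀ t s : ℂ, MvPolynomial.eval ![t, s] P =
        (1/(2*I)) * (g (t • z₀) ((u:ℂ) + I*σ*(t*s))
          - (starRingEnd ℂ) (g (((starRingEnd ℂ) s) • z₀)
              ((u:ℂ) + I*σ*((starRingEnd ℂ) t * (starRingEnd ℂ) s))))
        - ∑ j, (f (t • z₀) ((u:ℂ) + I*σ*(t*s)) j) *
            (starRingEnd ℂ) (f (((starRingEnd ℂ) s) • z₀)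
              ((u:ℂ) + I*σ*((starRingEnd ℂ) t * (starRingEnd ℂ) s)) j) := by
      intro t s
      rw [hP]
      simp only [map_sub, map_mul, map_sum, MvPolynomial.eval_C, e1, e2, e1f, e2f]
    have hvan : ∀ t : ℂ, MvPolynomial.eval ![t, (starRingEnd ℂ) t] P = 0 := by
      intro t
      rw [hEP]
      rw [Complex.conj_conj, show (starRingEnd ℂ) t * t = t * (starRingEnd ℂ) t from mul_comm _ _]
      set z := t • z₀ with hz
      set w := (u:ℂ) + I*σ*(t * (starRingEnd ℂ) t) with hw
      have hwim : w.im = ∑ j, ‖z j‖ ^ 2 := by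
        rw [hw, hz, Complex.mul_conj]
        have h1 : ((u:ℂ) + I*(σ:ℂ)*((Complex.normSq t : ℝ) : ℂ)).im = σ * Complex.normSq t := by
          simp
        rw [h1]
        have h2 : ∀ j, ‖(t • z₀) j‖ ^ 2 = Complex.normSq t * ‖z₀ j‖ ^ 2 := by
          intro j
          simp [Pi.smul_apply, norm_smul, mul_pow, Complex.normSq_eq_norm_sq,
            smul_eq_mul]
        simp only [h2, ← Finset.mul_sum, ← hσ]
        ring
      have hm := hmap z w hwim
      rw [Complex.sub_conj]
      have hre : (1/(2*I)) * (((2 * (g z w).im : ℝ) : ℂ) * I) = ((g z w).im : ℂ) := by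
        have hI := Complex.I_ne_zero
        field_simp
        push_cast
        ring
      rw [hre]
      have hsum : ∀ j, f z w j * (starRingEnd ℂ) (f z w j) = ((‖f z w j‖ ^ 2 : ℝ) : ℂ) := by
        intro j
        rw [Complex.mul_conj]
        norm_cast
        rw [Complex.normSq_eq_norm_sq]
      simp only [hsum]
      rw [hm]
      push_cast
      ring
    have h10 := polar P hvan 1 0
    rw [hEP] at h10
    simp only [map_zero, map_one, mul_zero, zero_smul, one_mul, one_smul, mul_zero,
      add_zero, hf0, Pi.zero_apply, zero_mul, Finset.sum_const_zero, sub_zero] at h10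
    have h2I : (1/(2*I) : ℂ) ≠ 0 := by
      simp [Complex.I_ne_zero]
    have := mul_eq_zero.mp h10
    rcases this with h' | h'
    · exact absurd h' h2I
    · exact sub_eq_zero.mp h'
  refine ⟨hf0, ?_, ?_⟩
  · intro z u
    rw [key z u]
    exact (key 0 u).symm
  · have h01 : (1:ℂ).im = ∑ j, ‖(0 : Fin n → ℂ) j‖ ^ 2 := by simp
    have h := hmap 0 1 h01
    rw [h]
    simp [hf0]
end

section
/- If a homogeneous polynomial identity c · Re((u + i|z|²)^m) = |F(z, u + i|z|²)|² holds for all z ∈ C^n, u ∈ R, where m ≥ 2, c is a nonnegative real constant, and F : C^n × C → C^n is a polynomial map, then c = 0 and F(z, u + i|z|²) = 0 for all z, u. -/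
open Complex

/-- If `c · Re((u + i|z|²)^m) = |F(z, u + i|z|²)|²` holds identically with `m ≥ 2`,
`c ≥ 0` and `F` a polynomial map, then `c = 0` and `F` vanishes on the hyperquadric. -/
theorem stmt_3 (n m : ℕ) (hm : 2 ≤ m) (c : ℝ) (hc : 0 ≤ c)
    (F : Fin n → MvPolynomial (Fin (n + 1)) ℂ)
    (Ff : (Fin n → ℂ) → ℂ → (Fin n → ℂ))
    (hFP : ∀ (z : Fin n → ℂ) (w : ℂ) (j : Fin n),
      Ff z w j = MvPolynomial.eval (Fin.snoc z w) (F j))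
    (hid : ∀ (z : Fin n → ℂ) (u : ℝ),
      c * ((((u : ℂ) + Complex.I * ((∑ i, ‖z i‖ ^ 2 : ℝ) : ℂ)) ^ m).re) =
        ∑ j, ‖Ff z ((u : ℂ) + Complex.I * ((∑ i, ‖z i‖ ^ 2 : ℝ) : ℂ)) j‖ ^ 2) :
    c = 0 ∧ ∀ (z : Fin n → ℂ) (u : ℝ),
      Ff z ((u : ℂ) + Complex.I * ((∑ i, ‖z i‖ ^ 2 : ℝ) : ℂ)) = 0 := by
  have hm0 : (m : ℝ) ≠ 0 := by positivity
  have hc0 : c = 0 := by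
    rcases Nat.eq_zero_or_pos n with hn | hn
    · subst hn
      have h := hid (fun i => i.elim0) 1
      simpa using h
    · set θ := Real.pi / m with hθ
      have hθpos : 0 < θ := by positivity
      have hθle : θ ≤ Real.pi := by
        rw [hθ]
        apply div_le_self Real.pi_pos.le
        exact_mod_cast Nat.one_le_of_lt hm
      set t := Real.sin θ with ht
      have ht0 : 0 ≤ t := Real.sin_nonneg_of_nonneg_of_le_pi hθpos.le hθle
      set z : Fin n → ℂ := fun i => if i = ⟨0, hn⟩ then ((Real.sqrt t : ℝ) : ℂ) else 0
        with hzdef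
      have hz : (∑ i, ‖z i‖ ^ 2 : ℝ) = t := by
        rw [Finset.sum_eq_single ⟨0, hn⟩]
        · simp [hzdef, Real.sq_sqrt ht0, _root_.abs_of_nonneg (Real.sqrt_nonneg t)]
        · intro b _ hb; simp [hzdef, hb]
        · simp
      have h := hid z (Real.cos θ)
      rw [hz] at h
      have hw : ((Real.cos θ : ℂ) + Complex.I * (t : ℂ)) = Complex.exp ((θ : ℂ) * Complex.I) := by
        rw [Complex.exp_mul_I, ht]
        push_cast
        ring
      rw [hw, ← Complex.exp_nat_mul] at h
      have harg : (m : ℂ) * ((θ : ℂ) * Complex.I) = (Real.pi : ℂ) * Complex.I := by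
        have hmc : (m : ℂ) ≠ 0 := by exact_mod_cast hm0
        rw [hθ]
        push_cast
        field_simp
      rw [harg, Complex.exp_pi_mul_I] at h
      simp only [Complex.neg_re, Complex.one_re] at h
      have hsum : 0 ≤ ∑ j, ‖Ff z ((Real.cos θ : ℂ) + Complex.I * ((t : ℝ) : ℂ)) j‖ ^ 2 :=
        Finset.sum_nonneg fun j _ => by positivity
      rw [hw] at hsum
      nlinarith [hsum, h]
  refine ⟨hc0, fun z u => ?_⟩
  have h := hid z u
  rw [hc0, zero_mul] at h
  have hall := (Finset.sum_eq_zero_iff_of_nonneg (fun j _ => by positivity)).mp h.symm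
  funext j
  have := hall j (Finset.mem_univ j)
  have hn0 : ‖Ff z ((u : ℂ) + Complex.I * ((∑ i, ‖z i‖ ^ 2 : ℝ) : ℂ)) j‖ = 0 := by
    nlinarith [norm_nonneg (Ff z ((u : ℂ) + Complex.I * ((∑ i, ‖z i‖ ^ 2 : ℝ) : ℂ)) j)]
  simpa using hn0
end
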